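/- The following are equivalent: (i) η* is a constant vector; (ii) S(M) = |E|/r(E); (iii) D(M) = |E|/r(E); (iv) S(M) = D(M). -/

import Mathlib

open Set Matroid

/-- The rank of a set in a matroid: the maximum cardinality of an independent subset. -/
noncomputable def Matroid.rk' {α : Type*} (M : Matroid α) (X : Set α) : ℕ :=
  sSup {n : ℕ | ∃ I, I ⊆ X ∧ M.Indep I ∧ n = Nat.card I}

/-- The set of indicator vectors of bases of a matroid, viewed as vectors in `ℝ^E`. -/
def Matroid.baseVecs {α : Type*} (M : Matroid α) : Set (α → ℝ) :=
  {f | ∃ B, M.IsBase B ∧ f = B.indicator 1}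

/-- A matroid is loopless if every singleton of the ground set is independent. -/
def Matroid.Loopless' {α : Type*} (M : Matroid α) : Prop := ∀ e ∈ M.E, M.Indep {e}

/-- The strength `S(M) = min{ |X| / (r(E) − r(E−X)) : X ⊆ E, r(E) > r(E−X) }`. -/
noncomputable def Matroid.strength {α : Type*} (M : Matroid α) : ℝ :=
  sInf {s : ℝ | ∃ X, X ⊆ M.E ∧ M.rk' (M.E \ X) < M.rk' M.E ∧
    s = (Nat.card X : ℝ) / ((M.rk' M.E : ℝ) - (M.rk' (M.E \ X) : ℝ))}

/-- The fractional arboricity `D(M) = max{ |X| / r(X) : X ⊆ E, r(X) > 0 }`. -/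
noncomputable def Matroid.arboricity {α : Type*} (M : Matroid α) : ℝ :=
  sSup {s : ℝ | ∃ X, X ⊆ M.E ∧ 0 < M.rk' X ∧ s = (Nat.card X : ℝ) / (M.rk' X : ℝ)}

/-!
For a strict lower level set `L` of the min-norm point `η*` (every element of `L` is smaller than
every element outside it), `η*(L) = r(L)`: otherwise some base in the support of `η*` meets `L` in
fewer than `r(L)` elements, and a basis exchange shifts a little mass from a larger coordinate to a
smaller one, which decreases the norm. Every point `η` of the base polytope satisfies
`r(E) - r(E - X) ≤ η(X) ≤ r(X)`, so applying the level-set identity to the top and bottom level sets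
of `η*` gives `S(M) = 1 / max η*` and `D(M) = 1 / min η*`. Since the average of `η*` is
`r(E) / |E|`, conditions (ii), (iii) and (iv) say that `max η*`, resp. `min η*`, equals the average,
resp. that they coincide; each holds exactly when `η*` is constant.
-/

section Generic

theorem exists_mem_forall_add_smul_sub_mem_convexHull {E : Type*} [AddCommGroup E] [Module ℝ E]
    {S : Set E} {x : E} (hx : x ∈ convexHull ℝ S) {g : E → ℝ} (hg : IsLinearMap ℝ g) :
    ∃ v ∈ S, g v ≤ g x ∧
      ∃ ε > (0 : ℝ), ∀ u ∈ S, ∀ t ∈ Icc 0 ε, x + t • (u - v) ∈ convexHull ℝ S := by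
  classical
  rw [convexHull_eq] at hx
  obtain ⟨ι, T, w, z, hw₀, hw₁, hz, rfl⟩ := hx
  -- discard the zero weights, so that the point chosen below carries positive weight
  rw [← Finset.centerMass_filter_ne_zero]
  rw [← Finset.sum_filter_ne_zero] at hw₁
  set T' := {i ∈ T | w i ≠ 0}
  have hpos : ∀ i ∈ T', 0 < w i := fun i hi ↦
    (hw₀ i (Finset.mem_filter.1 hi).1).lt_of_ne (Finset.mem_filter.1 hi).2.symm
  have hz' : ∀ i ∈ T', z i ∈ S := fun i hi ↦ hz i (Finset.mem_filter.1 hi).1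
  have hx : T'.centerMass w z ∈ convexHull ℝ S :=
    T'.centerMass_mem_convexHull (fun j hj ↦ (hpos j hj).le) (hw₁ ▸ one_pos) hz'
  obtain ⟨i, hi, hgi⟩ := ((hg.mk' g).concaveOn convex_univ).exists_le_of_centerMass
    (fun i hi ↦ (hpos i hi).le) (hw₁ ▸ one_pos) (fun _ _ ↦ mem_univ _)
  refine ⟨z i, hz' i hi, hgi, w i, hpos i hi, fun u hu t ht ↦ ?_⟩
  have hy : T'.centerMass w (Function.update z i u) = T'.centerMass w z + w i • (u - z i) := by
    rw [Finset.centerMass_eq_of_sum_1 _ _ hw₁, Finset.centerMass_eq_of_sum_1 _ _ hw₁,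
      ← Finset.add_sum_erase _ _ hi, ← Finset.add_sum_erase _ _ hi,
      Finset.sum_congr rfl fun j hj ↦ by rw [Function.update_of_ne (Finset.ne_of_mem_erase hj)],
      Function.update_self, smul_sub]
    abel
  have hy_mem : T'.centerMass w (Function.update z i u) ∈ convexHull ℝ S :=
    T'.centerMass_mem_convexHull (fun j hj ↦ (hpos j hj).le) (hw₁ ▸ one_pos) fun j hj ↦ by
      rcases eq_or_ne j i with rfl | hji
      · simpa using hu
      · simpa [hji] using hz' j hj
  convert (convex_convexHull ℝ S).add_smul_sub_mem hx hy_mem (t := t / w i)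
    ⟨div_nonneg ht.1 (hpos i hi).le, div_le_one_of_le₀ ht.2 (hpos i hi).le⟩ using 2
  rw [hy, add_sub_cancel_left, smul_smul, div_mul_cancel₀ _ (hpos i hi).ne']

variable {α : Type*} {η : α → ℝ} {a b : α}

lemma indicator_insert_sdiff_singleton_sub_indicator [DecidableEq α] {B : Set α} {e f : α}
    (he : e ∉ B) (hf : f ∈ B) :
    (insert e (B \ {f})).indicator (1 : α → ℝ) - B.indicator 1 = Pi.single e 1 - Pi.single f 1 := by
  have hef : e ≠ f := ne_of_mem_of_not_mem hf he |>.symm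
  ext x
  by_cases hxe : x = e
  · subst hxe; simp [he, hef]
  by_cases hxf : x = f
  · subst hxf; simp [hf, hef.symm]
  by_cases hxB : x ∈ B <;> simp [hxe, hxf, hxB]

lemma exists_forall_eq_iff_eq_of_le_of_ge (ha : ∀ e, η e ≤ η a) (hb : ∀ e, η b ≤ η e) :
    (∃ c, ∀ e, η e = c) ↔ η a = η b :=
  ⟨fun ⟨_, hc⟩ ↦ (hc a).trans (hc b).symm, fun h ↦ ⟨η a, fun e ↦ (ha e).antisymm (h ▸ hb e)⟩⟩

variable [Fintype α]

lemma exists_forall_eq_iff_sum_eq_card_mul_of_le (ha : ∀ e, η e ≤ η a) :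
    (∃ c, ∀ e, η e = c) ↔ ∑ e, η e = Fintype.card α * η a := by
  rw [← nsmul_eq_mul, ← Finset.card_univ, ← Finset.sum_const,
    Finset.sum_eq_sum_iff_of_le fun e _ ↦ ha e]
  exact ⟨fun ⟨_, hc⟩ e _ ↦ (hc e).trans (hc a).symm,
    fun h ↦ ⟨η a, fun e ↦ h e (Finset.mem_univ e)⟩⟩

lemma exists_forall_eq_iff_sum_eq_card_mul_of_ge (hb : ∀ e, η b ≤ η e) :
    (∃ c, ∀ e, η e = c) ↔ ∑ e, η e = Fintype.card α * η b := by
  rw [← nsmul_eq_mul, ← Finset.card_univ, ← Finset.sum_const, eq_comm,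
    Finset.sum_eq_sum_iff_of_le fun e _ ↦ hb e]
  exact ⟨fun ⟨_, hc⟩ e _ ↦ (hc b).trans (hc e).symm,
    fun h ↦ ⟨η b, fun e ↦ (h e (Finset.mem_univ e)).symm⟩⟩

lemma sum_sq_add_smul_single_sub_single_lt [DecidableEq α] {e f : α} {t : ℝ} (ht₀ : 0 < t)
    (ht : t < η f - η e) :
    ∑ i, (η + t • (Pi.single e 1 - Pi.single f 1) : α → ℝ) i ^ 2 < ∑ i, η i ^ 2 := by
  have hef : e ≠ f := by rintro rfl; linarith
  have hsq : ∀ i, (η + t • (Pi.single e 1 - Pi.single f 1) : α → ℝ) i ^ 2 =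
      η i ^ 2 + ((Pi.single e (2 * t * η e + t ^ 2) : α → ℝ) i +
        (Pi.single f (t ^ 2 - 2 * t * η f) : α → ℝ) i) := by
    intro i
    by_cases hie : i = e
    · subst hie; simp [hef]; ring
    by_cases hif : i = f
    · subst hif; simp [hef.symm]; ring
    simp [hie, hif]
  simp only [hsq, Finset.sum_add_distrib, Finset.sum_pi_single', Finset.mem_univ, if_true]
  nlinarith

lemma isLinearMap_sum_indicator (X : Set α) : IsLinearMap ℝ fun x : α → ℝ ↦ ∑ e, X.indicator x e :=
  ⟨fun x y ↦ by simp [indicator_add', Finset.sum_add_distrib],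
    fun c x ↦ by
      rw [smul_eq_mul, Finset.mul_sum]
      exact Finset.sum_congr rfl fun e _ ↦ indicator_const_smul_apply X c x e⟩

lemma sum_indicator_const (X : Set α) (c : ℝ) : ∑ e, X.indicator (fun _ ↦ c) e = X.ncard * c := by
  classical
  simp [indicator_apply, Finset.sum_ite, ncard_eq_toFinset_card']

lemma sum_indicator_indicator_one (B X : Set α) :
    ∑ e, X.indicator (B.indicator 1) e = ((B ∩ X).ncard : ℝ) := by
  rw [indicator_indicator, inter_comm, Pi.one_def, sum_indicator_const, mul_one]

lemma sum_indicator_eq_ncard_mul {X : Set α} {c : ℝ} (h : ∀ e ∈ X, η e = c) :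
    ∑ e, X.indicator η e = X.ncard * c := by
  rw [← sum_indicator_const, indicator_congr h]

lemma sum_indicator_le_ncard_mul (X : Set α) {c : ℝ} (h : ∀ e, η e ≤ c) :
    ∑ e, X.indicator η e ≤ X.ncard * c :=
  (Finset.sum_le_sum fun e _ ↦ indicator_le_indicator (h e)).trans_eq (sum_indicator_const X c)

lemma ncard_mul_le_sum_indicator (X : Set α) {c : ℝ} (h : ∀ e, c ≤ η e) :
    X.ncard * c ≤ ∑ e, X.indicator η e :=
  (sum_indicator_const X c).symm.trans_le (Finset.sum_le_sum fun e _ ↦ indicator_le_indicator (h e))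

lemma sum_indicator_add_sum_indicator_compl (X : Set α) (η : α → ℝ) :
    ∑ e, X.indicator η e + ∑ e, Xᶜ.indicator η e = ∑ e, η e := by
  rw [← Finset.sum_add_distrib]
  simp only [indicator_self_add_compl_apply]

def IsMinNormPoint (S : Set (α → ℝ)) (η : α → ℝ) : Prop :=
  η ∈ S ∧ ∀ ζ ∈ S, ∑ e, η e ^ 2 ≤ ∑ e, ζ e ^ 2

end Generic

namespace Matroid

section Rank

variable {α : Type*} [Finite α] {M : Matroid α} {B I L X : Set α}

lemma rk'_bddAbove (M : Matroid α) (X : Set α) :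
    BddAbove {n : ℕ | ∃ I, I ⊆ X ∧ M.Indep I ∧ n = Nat.card I} :=
  ⟨Nat.card α, by rintro n ⟨I, -, -, rfl⟩; exact Finite.card_subtype_le _⟩

lemma Indep.ncard_le_rk' (hI : M.Indep I) (hIX : I ⊆ X) : I.ncard ≤ M.rk' X :=
  le_csSup (M.rk'_bddAbove X) ⟨I, hIX, hI, (Nat.card_coe_set_eq I).symm⟩

lemma exists_indep_ncard_eq_rk' (M : Matroid α) (X : Set α) :
    ∃ I ⊆ X, M.Indep I ∧ I.ncard = M.rk' X := by
  obtain ⟨I, hIX, hI, h⟩ : M.rk' X ∈ {n : ℕ | ∃ I, I ⊆ X ∧ M.Indep I ∧ n = Nat.card I} :=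
    Nat.sSup_mem ⟨0, ∅, empty_subset X, M.empty_indep, by simp⟩ (M.rk'_bddAbove X)
  exact ⟨I, hIX, hI, by rw [h, Nat.card_coe_set_eq]⟩

lemma rk'_empty (M : Matroid α) : M.rk' ∅ = 0 := by
  obtain ⟨I, hI, -, h⟩ := M.exists_indep_ncard_eq_rk' ∅
  rw [← h, subset_empty_iff.1 hI, ncard_empty]

lemma IsBase.ncard_eq_rk' (hB : M.IsBase B) : B.ncard = M.rk' M.E := by
  refine (hB.indep.ncard_le_rk' hB.subset_ground).antisymm ?_
  obtain ⟨I, -, hI, h⟩ := M.exists_indep_ncard_eq_rk' M.E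
  obtain ⟨B', hB', hIB'⟩ := hI.exists_isBase_superset
  rw [← h, ← hB'.ncard_eq_ncard_of_isBase hB]
  exact ncard_le_ncard hIB'

lemma IsBase.exists_exchange_of_ncard_inter_lt (hB : M.IsBase B) (hI : M.Indep I) (hIL : I ⊆ L)
    (hlt : (B ∩ L).ncard < I.ncard) : ∃ e ∈ L \ B, ∃ f ∈ B \ L, M.IsBase (insert e (B \ {f})) := by
  obtain ⟨e, ⟨heI, heBL⟩, hins⟩ := (hB.indep.inter_right L).exists_insert_of_encard_lt hI
    (by rw [← (toFinite _).cast_ncard_eq, ← (toFinite _).cast_ncard_eq]; exact_mod_cast hlt)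
  have heB : e ∉ B := fun h ↦ heBL ⟨h, hIL heI⟩
  obtain ⟨B', hB', hinsB', hB'sub⟩ := hins.exists_isBase_subset_union_isBase hB
  have hB'B : B' ⊆ insert e B :=
    hB'sub.trans (union_subset (insert_subset_insert inter_subset_left) (subset_insert e B))
  have hne : B' ≠ insert e B := fun h ↦
    (hB.insert_dep ⟨hI.subset_ground heI, heB⟩).not_indep (h ▸ hB'.indep)
  obtain ⟨f, hfeB, hfB'⟩ := exists_of_ssubset (hB'B.ssubset_of_ne hne)
  have hfB : f ∈ B := hfeB.resolve_left fun h ↦ hfB' (h ▸ hinsB' (mem_insert e _))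
  have hfL : f ∉ L := fun h ↦ hfB' (hinsB' (mem_insert_of_mem e ⟨hfB, h⟩))
  obtain ⟨y, ⟨hyB', hyB⟩, hy⟩ := hB.exchange hB' ⟨hfB, hfB'⟩
  obtain rfl : y = e := (hB'B hyB').resolve_right hyB
  exact ⟨y, ⟨hIL heI, heB⟩, f, ⟨hfB, hfL⟩, hy⟩

end Rank

section BasePolytope

variable {α : Type*} [Fintype α] {M : Matroid α} {η : α → ℝ}

lemma sum_indicator_le_rk'_of_mem_convexHull (hη : η ∈ convexHull ℝ M.baseVecs) (X : Set α) :
    ∑ e, X.indicator η e ≤ M.rk' X := by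
  refine convexHull_min ?_ (convex_halfSpace_le (isLinearMap_sum_indicator X) _) hη
  rintro _ ⟨B, hB, rfl⟩
  rw [mem_ofPred_eq, sum_indicator_indicator_one]
  exact_mod_cast (hB.indep.subset inter_subset_left).ncard_le_rk' inter_subset_right

lemma rk'_sub_le_sum_indicator_of_mem_convexHull (hη : η ∈ convexHull ℝ M.baseVecs) (X : Set α) :
    (M.rk' M.E : ℝ) - M.rk' (M.E \ X) ≤ ∑ e, X.indicator η e := by
  refine convexHull_min ?_ (convex_halfSpace_ge (isLinearMap_sum_indicator X) _) hη
  rintro _ ⟨B, hB, rfl⟩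
  have hdiff : (B \ X).ncard ≤ M.rk' (M.E \ X) :=
    (hB.indep.subset sdiff_subset).ncard_le_rk' (sdiff_subset_sdiff_left hB.subset_ground)
  rw [mem_ofPred_eq, sum_indicator_indicator_one, ← hB.ncard_eq_rk',
    ← ncard_inter_add_ncard_sdiff_eq_ncard B X]
  push_cast
  linarith [(Nat.cast_le (α := ℝ)).2 hdiff]

lemma sum_eq_rk'_of_mem_convexHull (hE : M.E = univ) (hη : η ∈ convexHull ℝ M.baseVecs) :
    ∑ e, η e = M.rk' M.E := by
  have hle := sum_indicator_le_rk'_of_mem_convexHull hη univ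
  have hge := rk'_sub_le_sum_indicator_of_mem_convexHull hη univ
  rw [hE, sdiff_self, M.rk'_empty] at *
  simp only [indicator_univ, Nat.cast_zero, sub_zero] at hle hge
  exact hle.antisymm hge

end BasePolytope

section MinNormPoint

variable {α : Type*} [Fintype α] {M : Matroid α} {η : α → ℝ}

theorem rk'_le_sum_indicator_of_isMinNormPoint (hη : IsMinNormPoint (convexHull ℝ M.baseVecs) η)
    {L : Set α}     (hL : ∀ e ∈ L, ∀ f ∉ L, η e < η f) : (M.rk' L : ℝ) ≤ ∑ e, L.indicator η e := by
  classical
  by_contra! hlt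
  obtain ⟨_, ⟨B, hB, rfl⟩, hBL, ε, hε, hmove⟩ :=
    exists_mem_forall_add_smul_sub_mem_convexHull hη.1 (isLinearMap_sum_indicator L)
  rw [sum_indicator_indicator_one] at hBL
  obtain ⟨I, hIL, hI, hIcard⟩ := M.exists_indep_ncard_eq_rk' L
  obtain ⟨e, ⟨heL, heB⟩, f, ⟨hfB, hfL⟩, hB'⟩ := hB.exists_exchange_of_ncard_inter_lt hI hIL
    (by rw [hIcard]; exact_mod_cast hBL.trans_lt hlt)
  have hef := hL e heL f hfL
  set t := min ε ((η f - η e) / 2)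
  have hmoved := hmove _ ⟨_, hB', rfl⟩ t ⟨le_min hε.le (by linarith), min_le_left _ _⟩
  rw [indicator_insert_sdiff_singleton_sub_indicator heB hfB] at hmoved
  exact (hη.2 _ hmoved).not_gt (sum_sq_add_smul_single_sub_single_lt (lt_min hε (by linarith))
    ((min_le_right _ _).trans_lt (by linarith)))

theorem sum_indicator_eq_rk'_of_isMinNormPoint (hη : IsMinNormPoint (convexHull ℝ M.baseVecs) η)
    {L : Set α}     (hL : ∀ e ∈ L, ∀ f ∉ L, η e < η f) : ∑ e, L.indicator η e = M.rk' L :=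
  (sum_indicator_le_rk'_of_mem_convexHull hη.1 L).antisymm
    (rk'_le_sum_indicator_of_isMinNormPoint hη hL)

theorem strength_eq_inv_of_isMinNormPoint (hE : M.E = univ) (hrk : 0 < M.rk' M.E)
    (hη : IsMinNormPoint (convexHull ℝ M.baseVecs) η) {a : α}
    (ha : ∀ e, η e ≤ η a) : M.strength = (η a)⁻¹ := by
  have hsum := sum_eq_rk'_of_mem_convexHull hE hη.1
  have hpos : 0 < η a := by
    by_contra! h
    have : ∑ e, η e ≤ 0 := Finset.sum_nonpos fun e _ ↦ (ha e).trans h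
    rw [hsum] at this
    exact this.not_gt (by exact_mod_cast hrk)
  set X := {e | η e = η a}
  have hlow : ∀ e ∈ Xᶜ, ∀ f ∉ Xᶜ, η e < η f := fun e he f hf ↦
    (notMem_compl_iff.1 hf : η f = η a) ▸ (ha e).lt_of_ne he
  have hsplit := sum_indicator_add_sum_indicator_compl X η
  rw [sum_indicator_eq_ncard_mul (X := X) fun _ h ↦ h,
    sum_indicator_eq_rk'_of_isMinNormPoint hη hlow, hsum, compl_eq_univ_sdiff, ← hE] at hsplit
  have hX : (0 : ℝ) < X.ncard := Nat.cast_pos.2 ((ncard_pos (toFinite X)).2 ⟨a, rfl⟩)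
  have hlt : (M.rk' (M.E \ X) : ℝ) < M.rk' M.E := by nlinarith
  refine IsLeast.csInf_eq ⟨⟨X, hE ▸ subset_univ X, by exact_mod_cast hlt, ?_⟩, ?_⟩
  · rw [Nat.card_coe_set_eq, ← hsplit, add_sub_cancel_right]
    field_simp
  · rintro s ⟨Y, -, hY, rfl⟩
    have hd : (0 : ℝ) < M.rk' M.E - M.rk' (M.E \ Y) := sub_pos.2 (by exact_mod_cast hY)
    have hle := (rk'_sub_le_sum_indicator_of_mem_convexHull hη.1 Y).trans
      (sum_indicator_le_ncard_mul Y ha)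
    rw [Nat.card_coe_set_eq, le_div_iff₀ hd, inv_mul_le_iff₀ hpos]
    linarith

theorem arboricity_eq_inv_of_isMinNormPoint (hE : M.E = univ) (hloop : M.Loopless')
    (hη : IsMinNormPoint (convexHull ℝ M.baseVecs) η) {b : α}
    (hb : ∀ e, η b ≤ η e) : M.arboricity = (η b)⁻¹ := by
  set X := {e | η e = η b}
  have hlow : ∀ e ∈ X, ∀ f ∉ X, η e < η f := fun e he f hf ↦
    (he : η e = η b) ▸ (hb f).lt_of_ne fun h ↦ hf h.symm
  have hXsum := sum_indicator_eq_rk'_of_isMinNormPoint hη hlow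
  rw [sum_indicator_eq_ncard_mul (X := X) fun _ h ↦ h] at hXsum
  have hrk : 1 ≤ M.rk' X := by
    simpa using (hloop b (hE ▸ mem_univ b)).ncard_le_rk' (singleton_subset_iff.2 (by rfl : b ∈ X))
  have hX : (0 : ℝ) < X.ncard := Nat.cast_pos.2 ((ncard_pos (toFinite X)).2 ⟨b, rfl⟩)
  have hpos : 0 < η b := by
    have : (1 : ℝ) ≤ X.ncard * η b := hXsum ▸ (by exact_mod_cast hrk)
    nlinarith
  refine IsGreatest.csSup_eq ⟨⟨X, hE ▸ subset_univ X, hrk, ?_⟩, ?_⟩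
  · rw [Nat.card_coe_set_eq, ← hXsum]
    field_simp
  · rintro s ⟨Y, -, hY, rfl⟩
    have hle :=
      (ncard_mul_le_sum_indicator Y hb).trans (sum_indicator_le_rk'_of_mem_convexHull hη.1 Y)
    rw [Nat.card_coe_set_eq, div_le_iff₀ (by exact_mod_cast hY), le_inv_mul_iff₀ hpos]
    linarith

end MinNormPoint

end Matroid

/-- The following are equivalent: (i) `η*` is constant; (ii) `S(M) = |E|/r(E)`;
(iii) `D(M) = |E|/r(E)`; (iv) `S(M) = D(M)`. -/
theorem homogeneous_tfae {α : Type*} [Fintype α] [Nonempty α]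
    (M : Matroid α) (hE : M.E = Set.univ)
    (hloop : M.Loopless') (hrk : 0 < M.rk' M.E)
    (ηs : α → ℝ) (hmem : ηs ∈ convexHull ℝ M.baseVecs)
    (hmin : ∀ η ∈ convexHull ℝ M.baseVecs, ∑ e, ηs e ^ 2 ≤ ∑ e, η e ^ 2) :
    ((∃ c : ℝ, ∀ e, ηs e = c) ↔ M.strength = (Fintype.card α : ℝ) / (M.rk' M.E : ℝ)) ∧
    ((∃ c : ℝ, ∀ e, ηs e = c) ↔ M.arboricity = (Fintype.card α : ℝ) / (M.rk' M.E : ℝ)) ∧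
    ((∃ c : ℝ, ∀ e, ηs e = c) ↔ M.strength = M.arboricity) := by
  have hη : IsMinNormPoint (convexHull ℝ M.baseVecs) ηs := ⟨hmem, hmin⟩
  obtain ⟨a, ha⟩ := Finite.exists_max ηs
  obtain ⟨b, hb⟩ := Finite.exists_min ηs
  have hinv : ∀ c : ℝ, c⁻¹ = Fintype.card α / M.rk' M.E ↔ ∑ e, ηs e = Fintype.card α * c := by
    intro c
    rw [sum_eq_rk'_of_mem_convexHull hE hmem, inv_eq_iff_eq_inv, inv_div,
      eq_div_iff (by positivity), mul_comm, eq_comm]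
  rw [strength_eq_inv_of_isMinNormPoint hE hrk hη ha,
    arboricity_eq_inv_of_isMinNormPoint hE hloop hη hb, hinv, hinv, inv_inj]
  exact ⟨exists_forall_eq_iff_sum_eq_card_mul_of_le ha,
    exists_forall_eq_iff_sum_eq_card_mul_of_ge hb, exists_forall_eq_iff_eq_of_le_of_ge ha hb⟩
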